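/- arXiv:1911.02920 — 6 statements merged into one kernel-verified Lean document; each statement's English description precedes it below -/
import Mathlib

section
/- For all pairs X, Y of imaginary-quaternion pairs, G(X, JY) + J(G(X, Y)) = 0. -/
open Quaternion

noncomputable section

/-- The almost complex structure `J(α,β) = (1/√3)(2β−α, −2α+β)` on tangent pairs. -/
def Jmap (Z : ℍ[ℝ] × ℍ[ℝ]) : ℍ[ℝ] × ℍ[ℝ] :=
  ((Real.sqrt 3)⁻¹ • ((2 : ℝ) • Z.2 - Z.1), (Real.sqrt 3)⁻¹ • ((-2 : ℝ) • Z.1 + Z.2))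

/-- The almost product structure `P(α,β) = (β,α)`. -/
def Pmap (Z : ℍ[ℝ] × ℍ[ℝ]) : ℍ[ℝ] × ℍ[ℝ] := (Z.2, Z.1)

/-- The usual product structure `Q(α,β) = (−α,β)`. -/
def Qmap (Z : ℍ[ℝ] × ℍ[ℝ]) : ℍ[ℝ] × ℍ[ℝ] := (-Z.1, Z.2)

/-- The Euclidean inner product `⟨(α,β),(α',β')⟩ = ⟨α,α'⟩ + ⟨β,β'⟩`. -/
def eprod (Z Z' : ℍ[ℝ] × ℍ[ℝ]) : ℝ := (inner ℝ Z.1 Z'.1 : ℝ) + (inner ℝ Z.2 Z'.2 : ℝ)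

/-- The nearly Kähler metric `g(Z,Z') = (1/2)(⟨Z,Z'⟩ + ⟨JZ,JZ'⟩)`. -/
def gNK (Z Z' : ℍ[ℝ] × ℍ[ℝ]) : ℝ := (1 / 2) * (eprod Z Z' + eprod (Jmap Z) (Jmap Z'))

/-- The cross product of imaginary quaternions `α×β = (1/2)(αβ − βα)`. -/
def qcross (a b : ℍ[ℝ]) : ℍ[ℝ] := (1 / 2 : ℝ) • (a * b - b * a)

/-- The tensor `G((α,β),(γ,δ)) = (2/(3√3))(β×γ+α×δ+α×γ−2β×δ, −α×δ−β×γ+2α×γ−β×δ)`. -/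
def Gmap (X Y : ℍ[ℝ] × ℍ[ℝ]) : ℍ[ℝ] × ℍ[ℝ] :=
  (2 / (3 * Real.sqrt 3) : ℝ) •
    (qcross X.2 Y.1 + qcross X.1 Y.2 + qcross X.1 Y.1 - (2 : ℝ) • qcross X.2 Y.2,
     -qcross X.1 Y.2 - qcross X.2 Y.1 + (2 : ℝ) • qcross X.1 Y.1 - qcross X.2 Y.2)

/-
Both sides are combinations of the four cross products of the components of `X = (α, β)` and
`Y = (γ, δ)`. Since `J = A / √3` with `A² = -3`, feeding `JY` into the second slot of `G` and
applying `J` to `G(X, Y)` both give `±(2/3) (β×γ + α×δ − α×γ, α×δ + β×γ − β×δ)`.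
-/

theorem qcross_add_right (a b c : ℍ[ℝ]) : qcross a (b + c) = qcross a b + qcross a c := by
  simp only [qcross, mul_add, add_mul]
  module

theorem qcross_sub_right (a b c : ℍ[ℝ]) : qcross a (b - c) = qcross a b - qcross a c := by
  simp only [qcross, mul_sub, sub_mul]
  module

theorem qcross_smul_right (a b : ℍ[ℝ]) (r : ℝ) : qcross a (r • b) = r • qcross a b := by
  simp only [qcross, mul_smul_comm, smul_mul_assoc]
  module

theorem Gmap_Jmap_right (X Y : ℍ[ℝ] × ℍ[ℝ]) :
    Gmap X (Jmap Y) = (2 / 3 : ℝ) •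
      (qcross X.2 Y.1 + qcross X.1 Y.2 - qcross X.1 Y.1,
       qcross X.1 Y.2 + qcross X.2 Y.1 - qcross X.2 Y.2) := by
  simp only [Gmap, Jmap, qcross_add_right, qcross_sub_right, qcross_smul_right, Prod.smul_mk,
    Prod.mk.injEq]
  constructor <;> match_scalars <;> field_simp <;> norm_num

theorem Jmap_Gmap (X Y : ℍ[ℝ] × ℍ[ℝ]) :
    Jmap (Gmap X Y) = -(2 / 3 : ℝ) •
      (qcross X.2 Y.1 + qcross X.1 Y.2 - qcross X.1 Y.1,
       qcross X.1 Y.2 + qcross X.2 Y.1 - qcross X.2 Y.2) := by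
  simp only [Gmap, Jmap, Prod.smul_mk, Prod.mk.injEq]
  constructor <;> match_scalars <;> field_simp <;> norm_num

theorem G_anticommutes_J_general (X Y : ℍ[ℝ] × ℍ[ℝ]) :
    Gmap X (Jmap Y) + Jmap (Gmap X Y) = 0 := by
  rw [Gmap_Jmap_right, Jmap_Gmap, neg_smul, add_neg_cancel]

theorem G_anticommutes_J (X Y : ℍ[ℝ] × ℍ[ℝ])
    (hX1 : X.1.re = 0) (hX2 : X.2.re = 0) (hY1 : Y.1.re = 0) (hY2 : Y.2.re = 0) :
    Gmap X (Jmap Y) + Jmap (Gmap X Y) = 0 :=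
  G_anticommutes_J_general X Y
end
end

section
/- For all pairs X, Y of imaginary-quaternion pairs, P(G(X,Y)) + G(PX, PY) = 0. -/
open Quaternion

noncomputable section

-- Swapping the factors only re-weights the four cross products `α×γ, α×δ, β×γ, β×δ`, which
-- `module` treats as atoms: the identity is formal and needs no property of `qcross`.
theorem Gmap_Pmap (X Y : ℍ[ℝ] × ℍ[ℝ]) : Gmap (Pmap X) (Pmap Y) = -Pmap (Gmap X Y) := by
  simp only [Pmap, Gmap, Prod.smul_mk, Prod.neg_mk, Prod.mk.injEq]
  constructor <;> module

theorem P_G_relation_general (X Y : ℍ[ℝ] × ℍ[ℝ]) :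
    Pmap (Gmap X Y) + Gmap (Pmap X) (Pmap Y) = 0 := by
  rw [Gmap_Pmap, add_neg_cancel]

theorem P_G_relation (X Y : ℍ[ℝ] × ℍ[ℝ])
    (hX1 : X.1.re = 0) (hX2 : X.2.re = 0) (hY1 : Y.1.re = 0) (hY2 : Y.2.re = 0) :
    Pmap (Gmap X Y) + Gmap (Pmap X) (Pmap Y) = 0 :=
  P_G_relation_general X Y
end
end

section
/- Let c be a unit quaternion and define φ_c(α,β) = (cα c̄, cβ c̄) on pairs of imaginary quaternions (this is the tangent representation of the isometry F_{abc}(p,q)=(ap c̄, bq c̄) of S³×S³). Then cα c̄ is again imaginary for imaginary α, and φ_c satisfies: g(φ_c Z, φ_c Z') = g(Z, Z'), φ_c ∘ J = J ∘ φ_c, φ_c ∘ P = P ∘ φ_c, and φ_c(G(Z, W)) = G(φ_c Z, φ_c W) for all pairs Z, Z', W of imaginary quaternions; hence F_{abc} preserves the metric g, the almost complex structure J and the almost product structure P. -/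
open Quaternion

noncomputable section

/-- The tangent representation of the isometry `F_{abc}(p,q) = (a p c̄, b q c̄)`. -/
def phiMap (c : ℍ[ℝ]) (Z : ℍ[ℝ] × ℍ[ℝ]) : ℍ[ℝ] × ℍ[ℝ] :=
  (c * Z.1 * star c, c * Z.2 * star c)

/-!
Conjugation `a ↦ c a c̄` by a unit quaternion is a real ⋆-algebra automorphism of `ℍ`, and `φ_c`
applies it to both components. Every structure in sight is built from such operations: `J` and `P`
are real-linear in the components, `G` is made of commutators, and `g` of the inner product
`⟨a, b⟩ = re (a b̄)`, where `re a` is read off from `a + ā = 2 re a`. So any ⋆-algebra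
automorphism, applied componentwise, preserves all of them.
-/

open Quaternion

lemma Quaternion.mem_unitary_of_norm_eq_one {c : ℍ[ℝ]} (hc : ‖c‖ = 1) : c ∈ unitary ℍ[ℝ] := by
  have hnormSq : normSq c = 1 := by rw [normSq_eq_norm_mul_self, hc, one_mul]
  rw [Unitary.mem_iff, star_mul_self, self_mul_star, hnormSq]
  simp

lemma phiMap_eq_prodMap_conjStarAlgAut {c : ℍ[ℝ]} (hc : ‖c‖ = 1) :
    phiMap c = Prod.map (Unitary.conjStarAlgAut ℝ ℍ[ℝ] ⟨c, mem_unitary_of_norm_eq_one hc⟩)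
      (Unitary.conjStarAlgAut ℝ ℍ[ℝ] ⟨c, mem_unitary_of_norm_eq_one hc⟩) :=
  rfl

lemma Jmap_prodMap {F : Type*} [FunLike F ℍ[ℝ] ℍ[ℝ]] [LinearMapClass F ℝ ℍ[ℝ] ℍ[ℝ]] (f : F)
    (Z : ℍ[ℝ] × ℍ[ℝ]) : Jmap (Prod.map f f Z) = Prod.map f f (Jmap Z) := by
  simp only [Jmap, Prod.map, map_smul, map_sub, map_add]

section AlgHomClass

variable {F : Type*} [FunLike F ℍ[ℝ] ℍ[ℝ]] [AlgHomClass F ℝ ℍ[ℝ] ℍ[ℝ]] (f : F)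

lemma map_qcross (a b : ℍ[ℝ]) : f (qcross a b) = qcross (f a) (f b) := by
  simp only [qcross, map_smul, map_sub, map_mul]

lemma Gmap_prodMap (X Y : ℍ[ℝ] × ℍ[ℝ]) :
    Gmap (Prod.map f f X) (Prod.map f f Y) = Prod.map f f (Gmap X Y) := by
  simp only [Gmap, Prod.map, Prod.smul_mk, map_smul, map_sub, map_add, map_neg, map_qcross]

variable [StarHomClass F ℍ[ℝ] ℍ[ℝ]]

lemma Quaternion.re_map_of_starHomClass (a : ℍ[ℝ]) : (f a).re = a.re := by
  have h : ((2 * (f a).re : ℝ) : ℍ[ℝ]) = ((2 * a.re : ℝ) : ℍ[ℝ]) := by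
    rw [← self_add_star' (f a), ← map_star, ← map_add, self_add_star' a]
    exact AlgHomClass.commutes f (2 * a.re)
  linarith [coe_injective h]

lemma Quaternion.inner_map_map_of_starHomClass (a b : ℍ[ℝ]) :
    inner ℝ (f a) (f b) = inner ℝ a b := by
  rw [inner_def, inner_def, ← map_star, ← map_mul, re_map_of_starHomClass]

lemma eprod_prodMap (Z Z' : ℍ[ℝ] × ℍ[ℝ]) :
    eprod (Prod.map f f Z) (Prod.map f f Z') = eprod Z Z' := by
  simp only [eprod, Prod.map_fst, Prod.map_snd, inner_map_map_of_starHomClass]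

lemma gNK_prodMap (Z Z' : ℍ[ℝ] × ℍ[ℝ]) :
    gNK (Prod.map f f Z) (Prod.map f f Z') = gNK Z Z' := by
  rw [gNK, Jmap_prodMap, Jmap_prodMap, eprod_prodMap, eprod_prodMap, gNK]

end AlgHomClass

theorem Fabc_preserves_g_J_P_G (c : ℍ[ℝ]) (hc : ‖c‖ = 1) :
    (∀ α : ℍ[ℝ], α.re = 0 → (c * α * star c).re = 0) ∧
    (∀ Z Z' W : ℍ[ℝ] × ℍ[ℝ],
      Z.1.re = 0 → Z.2.re = 0 → Z'.1.re = 0 → Z'.2.re = 0 → W.1.re = 0 → W.2.re = 0 →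
      gNK (phiMap c Z) (phiMap c Z') = gNK Z Z' ∧
      phiMap c (Jmap Z) = Jmap (phiMap c Z) ∧
      phiMap c (Pmap Z) = Pmap (phiMap c Z) ∧
      phiMap c (Gmap Z W) = Gmap (phiMap c Z) (phiMap c W)) := by
  set σ := Unitary.conjStarAlgAut ℝ ℍ[ℝ] ⟨c, mem_unitary_of_norm_eq_one hc⟩
  refine ⟨fun α hα => (re_map_of_starHomClass σ α).trans hα, fun Z Z' W _ _ _ _ _ _ => ?_⟩
  rw [phiMap_eq_prodMap_conjStarAlgAut hc]
  exact ⟨gNK_prodMap σ Z Z', (Jmap_prodMap σ Z).symm, rfl, (Gmap_prodMap σ Z W).symm⟩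
end
end

section
/- Let p be a unit quaternion and define T_p(α,β) = (−pα p̄, p(β−α)p̄) on pairs of imaginary quaternions (this is the tangent representation of the map F₂(p,q)=(p̄, q p̄) of S³×S³). Then T_p ∘ J = −J ∘ T_p; that is, F₂ preserves the almost complex structure J up to sign. -/
open Quaternion

noncomputable section

/-- The tangent representation of the map `F₂(p,q) = (p̄, q p̄)`. -/
def Tmap (p : ℍ[ℝ]) (Z : ℍ[ℝ] × ℍ[ℝ]) : ℍ[ℝ] × ℍ[ℝ] :=
  (-(p * Z.1 * star p), p * (Z.2 - Z.1) * star p)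

/-!
`T_p` is `T_1(α,β) = (−α, β−α)` followed by the real-linear conjugation `x ↦ p x p̄` on both
factors. Since `J` has real coefficients, it commutes with that conjugation, so everything reduces
to `p = 1`, where the claim is the identity `T_1 J = −J T_1` between real `2 × 2` matrices.
-/

theorem Jmap_prodMap_s13 (f : ℍ[ℝ] →ₗ[ℝ] ℍ[ℝ]) (Z : ℍ[ℝ] × ℍ[ℝ]) :
    Jmap (f.prodMap f Z) = f.prodMap f (Jmap Z) := by
  simp only [Jmap, LinearMap.prodMap_apply, map_smul, map_sub, map_add]

theorem Tmap_eq_prodMap_Tmap_one (p : ℍ[ℝ]) (Z : ℍ[ℝ] × ℍ[ℝ]) :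
    let conj := LinearMap.mulLeftRight ℝ (p, star p)
    Tmap p Z = conj.prodMap conj (Tmap 1 Z) := by
  simp only [Tmap, LinearMap.prodMap_apply, LinearMap.mulLeftRight_apply, star_one, one_mul,
    mul_one, mul_neg, neg_mul]

theorem Tmap_one_Jmap (Z : ℍ[ℝ] × ℍ[ℝ]) : Tmap 1 (Jmap Z) = -Jmap (Tmap 1 Z) := by
  simp only [Tmap, Jmap, star_one, one_mul, mul_one, Prod.neg_mk, Prod.mk.injEq]
  constructor <;> module

theorem F2_anticommutes_J_general (p : ℍ[ℝ])
    (α β : ℍ[ℝ]) :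
    Tmap p (Jmap (α, β)) = -Jmap (Tmap p (α, β)) := by
  rw [Tmap_eq_prodMap_Tmap_one, Tmap_one_Jmap, map_neg, ← Jmap_prodMap_s13,
    ← Tmap_eq_prodMap_Tmap_one]

theorem F2_anticommutes_J (p : ℍ[ℝ]) (hp : ‖p‖ = 1)
    (α β : ℍ[ℝ]) (hα : α.re = 0) (hβ : β.re = 0) :
    Tmap p (Jmap (α, β)) = -Jmap (Tmap p (α, β)) :=
  F2_anticommutes_J_general p α β
end
end

section
/- Let p be a unit quaternion and define T_p(α,β) = (−pα p̄, p(β−α)p̄) on pairs of imaginary quaternions (this is the tangent representation of the map F₂(p,q)=(p̄, q p̄) of S³×S³). Then for every pair Z of imaginary quaternions, P(T_p(Z)) = T_p((−(1/2)P + (√3/2)JP)(Z)); that is, F₂ intertwines P with the almost product structure −(1/2)P + (√3/2)JP. -/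
open Quaternion

noncomputable section

theorem neg_half_smul_Pmap_add_sqrt_three_div_two_smul_Jmap_Pmap (Z : ℍ[ℝ] × ℍ[ℝ]) :
    (-(1 / 2) : ℝ) • Pmap Z + (Real.sqrt 3 / 2 : ℝ) • Jmap (Pmap Z) = (Z.1 - Z.2, -Z.2) := by
  have h : Real.sqrt 3 / 2 * (Real.sqrt 3)⁻¹ = 1 / 2 := by field_simp
  simp only [Pmap, Jmap, Prod.smul_mk, Prod.mk_add_mk, smul_smul, h, Prod.mk.injEq]
  constructor <;> module

theorem Pmap_Tmap (p : ℍ[ℝ]) (Z : ℍ[ℝ] × ℍ[ℝ]) :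
    Pmap (Tmap p Z) = Tmap p (Z.1 - Z.2, -Z.2) := by
  simp only [Pmap, Tmap, Prod.mk.injEq]
  constructor <;> noncomm_ring

theorem F2_intertwines_P_general (p : ℍ[ℝ])
    (Z : ℍ[ℝ] × ℍ[ℝ]) :
    Pmap (Tmap p Z) =
      Tmap p ((-(1 / 2) : ℝ) • Pmap Z + (Real.sqrt 3 / 2 : ℝ) • Jmap (Pmap Z)) := by
  rw [neg_half_smul_Pmap_add_sqrt_three_div_two_smul_Jmap_Pmap, Pmap_Tmap]

theorem F2_intertwines_P (p : ℍ[ℝ]) (hp : ‖p‖ = 1)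
    (Z : ℍ[ℝ] × ℍ[ℝ]) (hZ1 : Z.1.re = 0) (hZ2 : Z.2.re = 0) :
    Pmap (Tmap p Z) =
      Tmap p ((-(1 / 2) : ℝ) • Pmap Z + (Real.sqrt 3 / 2 : ℝ) • Jmap (Pmap Z)) :=
  F2_intertwines_P_general p Z
end
end

section
/- Let p be a unit quaternion and define T_p(α,β) = (−pα p̄, p(β−α)p̄) on pairs of imaginary quaternions (this is the tangent representation of the map F₂(p,q)=(p̄, q p̄) of S³×S³). Then g(T_p Z, T_p Z') = g(Z, Z') for all pairs Z, Z' of imaginary quaternions; that is, F₂ is an isometry of the nearly Kähler metric g. -/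
open Quaternion

noncomputable section

/-!
`T_p` is the linear map `(α, β) ↦ (−α, β − α)` followed by conjugation `x ↦ p x p̄` in each factor.
For a unit quaternion conjugation is a linear isometry of `ℍ`, so it preserves every inner
product occurring in `g`. Expanding `J`, the metric is
`g(Z, Z') = (2/3)(2⟨α,α'⟩ + 2⟨β,β'⟩ − ⟨α,β'⟩ − ⟨β,α'⟩)`, a form visibly invariant under
`(α, β) ↦ (−α, β − α)`.
-/

open scoped RealInnerProductSpace

theorem Quaternion.inner_mul_mul_of_norm_eq_one {p q : ℍ[ℝ]} (hp : ‖p‖ = 1) (hq : ‖q‖ = 1)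
    (x y : ℍ[ℝ]) : ⟪p * x * q, p * y * q⟫ = ⟪x, y⟫ :=
  (LinearMap.norm_map_iff_inner_map_map (LinearMap.mulLeftRight ℝ (p, q))).mp
    (fun z => by simp [norm_mul, hp, hq]) x y

theorem gNK_eq (Z Z' : ℍ[ℝ] × ℍ[ℝ]) :
    gNK Z Z' = 2 / 3 * (2 * ⟪Z.1, Z'.1⟫ + 2 * ⟪Z.2, Z'.2⟫ - ⟪Z.1, Z'.2⟫ - ⟪Z.2, Z'.1⟫) := by
  have inv_sqrt_three_sq : (√3)⁻¹ * (√3)⁻¹ = (1 / 3 : ℝ) := by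
    rw [← mul_inv, Real.mul_self_sqrt (by norm_num : (0 : ℝ) ≤ 3), one_div]
  simp only [gNK, eprod, Jmap, real_inner_smul_left, real_inner_smul_right, inner_sub_left,
    inner_sub_right, inner_add_left, inner_add_right]
  linear_combination (1 / 2) * (5 * ⟪Z.1, Z'.1⟫ + 5 * ⟪Z.2, Z'.2⟫ - 4 * ⟪Z.1, Z'.2⟫
    - 4 * ⟪Z.2, Z'.1⟫) * inv_sqrt_three_sq

theorem F2_isometry_general (p : ℍ[ℝ]) (hp : ‖p‖ = 1)
    (Z Z' : ℍ[ℝ] × ℍ[ℝ]) :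
    gNK (Tmap p Z) (Tmap p Z') = gNK Z Z' := by
  have hconj := Quaternion.inner_mul_mul_of_norm_eq_one hp ((_root_.norm_star p).trans hp)
  rw [gNK_eq, gNK_eq]
  simp only [Tmap, inner_neg_left, inner_neg_right, hconj, inner_sub_left, inner_sub_right]
  ring

theorem F2_isometry (p : ℍ[ℝ]) (hp : ‖p‖ = 1)
    (Z Z' : ℍ[ℝ] × ℍ[ℝ]) (hZ1 : Z.1.re = 0) (hZ2 : Z.2.re = 0)
    (hZ'1 : Z'.1.re = 0) (hZ'2 : Z'.2.re = 0) :
    gNK (Tmap p Z) (Tmap p Z') = gNK Z Z' :=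
  F2_isometry_general p hp Z Z'
end
end
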